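/- Let 1 < p < 2, k ≥ 1 and M > 0. There exists a constant c = c(p, M) > 0 such that for all ξ, η ∈ ℝ^k with |η| ≤ M one has |V(ξ − η)| ≤ c(p, M) · |V(ξ) − V(η)|. -/

import Mathlib

/-!
With `α = (p - 2)/4 ≤ 0` and `u = ξ - η`, differentiate `t ↦ ⟪V(η + t u), u⟫` along the segment
from `η` to `ξ`. Cauchy–Schwarz and `α ≤ 0` bound the derivative below by
`(1 + 2α) (1 + |η + t u|²)^α |u|² = (p/2) (1 + |η + t u|²)^α |u|²`, and on the segment
`1 + |η + t u|² ≤ 1 + |ξ|² + |η|²`. This gives the monotonicity estimate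
`(p/2) (1 + |ξ|² + |η|²)^α |u|² ≤ ⟪V ξ - V η, u⟫`. When `|η| ≤ M`, the weight
`1 + |ξ|² + |η|²` is at most `(2 + 3M²)(1 + |u|²)`, so the estimate turns into a lower bound on
`|V ξ - V η|` by a multiple of `(1 + |u|²)^α |u| = |V u|`.
-/

/-- The auxiliary function `V(ξ) = (1 + |ξ|²)^((p-2)/4) ξ`. -/
noncomputable def V {E : Type*} [NormedAddCommGroup E] [NormedSpace ℝ E] (p : ℝ) (ξ : E) : E :=
  ((1 + ‖ξ‖ ^ 2) ^ ((p - 2) / 4)) • ξ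

theorem norm_V {E : Type*} [NormedAddCommGroup E] [NormedSpace ℝ E] (p : ℝ) (ξ : E) :
    ‖V p ξ‖ = (1 + ‖ξ‖ ^ 2) ^ ((p - 2) / 4) * ‖ξ‖ := by
  rw [V, norm_smul, Real.norm_of_nonneg (by positivity)]

theorem one_add_sq_add_sq_le_of_norm_le {E : Type*} [SeminormedAddCommGroup E] {ξ η : E} {M : ℝ}
    (hη : ‖η‖ ≤ M) : 1 + ‖ξ‖ ^ 2 + ‖η‖ ^ 2 ≤ (2 + 3 * M ^ 2) * (1 + ‖ξ - η‖ ^ 2) := by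
  have hξ : ‖ξ‖ ≤ ‖ξ - η‖ + M := by linarith [norm_le_norm_add_norm_sub' ξ η, norm_sub_rev ξ η]
  nlinarith [norm_nonneg ξ, norm_nonneg η, norm_nonneg (ξ - η), sq_nonneg (‖ξ - η‖ - M),
    mul_le_mul hη hη (norm_nonneg η) (by linarith [norm_nonneg η])]

open RealInnerProductSpace

section InnerProductSpace

variable {E : Type*} [NormedAddCommGroup E] [InnerProductSpace ℝ E]

theorem inner_V_left (p : ℝ) (ξ u : E) :
    ⟪V p ξ, u⟫ = (1 + ‖ξ‖ ^ 2) ^ ((p - 2) / 4) * ⟪ξ, u⟫ :=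
  real_inner_smul_left _ _ _

theorem hasDerivAt_inner_V_line (p : ℝ) (η u : E) (t : ℝ) :
    HasDerivAt (fun s : ℝ => ⟪V p (η + s • u), u⟫)
      (2 * ⟪η + t • u, u⟫ * ((p - 2) / 4) * (1 + ‖η + t • u‖ ^ 2) ^ ((p - 2) / 4 - 1)
          * ⟪η + t • u, u⟫ + (1 + ‖η + t • u‖ ^ 2) ^ ((p - 2) / 4) * ‖u‖ ^ 2) t := by
  have hline : HasDerivAt (fun s : ℝ => η + s • u) u t := by
    simpa using ((hasDerivAt_id t).smul_const u).const_add η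
  have hweight := (hline.norm_sq.const_add 1).rpow_const (p := (p - 2) / 4)
    (Or.inl (by positivity))
  have hpair := hline.inner ℝ (hasDerivAt_const t u)
  simp only [inner_zero_right, zero_add, real_inner_self_eq_norm_sq] at hpair
  simp only [inner_V_left]
  exact hweight.mul hpair

theorem half_mul_rpow_mul_le_of_sq_le_mul {p g s c : ℝ} (hp2 : p ≤ 2) (hg : 0 < g)
    (hs : s ^ 2 ≤ g * c) :
    p / 2 * g ^ ((p - 2) / 4) * c ≤
      2 * s * ((p - 2) / 4) * g ^ ((p - 2) / 4 - 1) * s + g ^ ((p - 2) / 4) * c := by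
  have hpow : g ^ ((p - 2) / 4 - 1) * g = g ^ ((p - 2) / 4) := by
    rw [← Real.rpow_add_one hg.ne']; ring_nf
  have hpos : 0 ≤ g ^ ((p - 2) / 4 - 1) := by positivity
  have hscaled : (p - 2) / 2 * g ^ ((p - 2) / 4 - 1) * (g * c) ≤
      (p - 2) / 2 * g ^ ((p - 2) / 4 - 1) * s ^ 2 :=
    mul_le_mul_of_nonpos_left hs (mul_nonpos_of_nonpos_of_nonneg (by linarith) hpos)
  have hrw : (p - 2) / 2 * g ^ ((p - 2) / 4 - 1) * (g * c) =
      (p - 2) / 2 * g ^ ((p - 2) / 4) * c := by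
    rw [← hpow]; ring
  nlinarith

theorem norm_add_smul_sub_sq_le (ξ η : E) {t : ℝ} (ht : t ∈ Set.Icc (0 : ℝ) 1) :
    ‖η + t • (ξ - η)‖ ^ 2 ≤ ‖ξ‖ ^ 2 + ‖η‖ ^ 2 := by
  obtain ⟨ht0, ht1⟩ := ht
  have hcomb : η + t • (ξ - η) = (1 - t) • η + t • ξ := by module
  have hle : ‖η + t • (ξ - η)‖ ≤ (1 - t) * ‖η‖ + t * ‖ξ‖ := by
    rw [hcomb]
    refine (norm_add_le _ _).trans_eq ?_
    rw [norm_smul, norm_smul, Real.norm_of_nonneg (by linarith), Real.norm_of_nonneg ht0]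
  have hnn := norm_nonneg (η + t • (ξ - η))
  nlinarith [norm_nonneg ξ, norm_nonneg η, mul_nonneg ht0 (sub_nonneg.2 ht1),
    sq_nonneg (‖ξ‖ - ‖η‖)]

theorem mul_norm_sq_le_inner_V_sub_V {p : ℝ} (hp0 : 0 ≤ p) (hp2 : p ≤ 2) (ξ η : E) :
    p / 2 * (1 + ‖ξ‖ ^ 2 + ‖η‖ ^ 2) ^ ((p - 2) / 4) * ‖ξ - η‖ ^ 2 ≤
      ⟪V p ξ - V p η, ξ - η⟫ := by
  set u := ξ - η
  have hderiv := hasDerivAt_inner_V_line p η u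
  have hmono := (convex_Icc (0 : ℝ) 1).mul_sub_le_image_sub_of_le_deriv
    (fun t _ => (hderiv t).continuousAt.continuousWithinAt)
    (fun t _ => (hderiv t).differentiableAt.differentiableWithinAt)
    (C := p / 2 * (1 + ‖ξ‖ ^ 2 + ‖η‖ ^ 2) ^ ((p - 2) / 4) * ‖u‖ ^ 2) ?_
    0 (by simp) 1 (by simp) zero_le_one
  · simpa [u, inner_sub_left] using hmono
  intro t ht
  rw [interior_Icc] at ht
  rw [(hderiv t).deriv]
  set w := η + t • u
  have hw : 1 + ‖w‖ ^ 2 ≤ 1 + ‖ξ‖ ^ 2 + ‖η‖ ^ 2 := by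
    linarith [norm_add_smul_sub_sq_le ξ η (Set.Ioo_subset_Icc_self ht)]
  have hcs : ⟪w, u⟫ ^ 2 ≤ (1 + ‖w‖ ^ 2) * ‖u‖ ^ 2 := by
    have := abs_real_inner_le_norm w u
    nlinarith [abs_nonneg ⟪w, u⟫, sq_abs ⟪w, u⟫, norm_nonneg u, norm_nonneg w]
  have hweight : (1 + ‖ξ‖ ^ 2 + ‖η‖ ^ 2) ^ ((p - 2) / 4) ≤ (1 + ‖w‖ ^ 2) ^ ((p - 2) / 4) :=
    Real.rpow_le_rpow_of_nonpos (by positivity) hw (by linarith)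
  refine le_trans ?_ (half_mul_rpow_mul_le_of_sq_le_mul hp2 (by positivity) hcs)
  gcongr

theorem mul_norm_le_norm_V_sub_V {p : ℝ} (hp0 : 0 ≤ p) (hp2 : p ≤ 2) (ξ η : E) :
    p / 2 * (1 + ‖ξ‖ ^ 2 + ‖η‖ ^ 2) ^ ((p - 2) / 4) * ‖ξ - η‖ ≤ ‖V p ξ - V p η‖ := by
  rcases (norm_nonneg (ξ - η)).eq_or_lt with h | h
  · rw [← h, mul_zero]; exact norm_nonneg _
  refine le_of_mul_le_mul_right ?_ h
  calc _ = p / 2 * (1 + ‖ξ‖ ^ 2 + ‖η‖ ^ 2) ^ ((p - 2) / 4) * ‖ξ - η‖ ^ 2 := by ring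
    _ ≤ ⟪V p ξ - V p η, ξ - η⟫ := mul_norm_sq_le_inner_V_sub_V hp0 hp2 ξ η
    _ ≤ ‖V p ξ - V p η‖ * ‖ξ - η‖ := real_inner_le_norm _ _

theorem norm_V_sub_le_of_norm_le {p : ℝ} (hp0 : 0 < p) (hp2 : p ≤ 2) {M : ℝ} {ξ η : E}
    (hη : ‖η‖ ≤ M) :
    ‖V p (ξ - η)‖ ≤ 2 / p * (2 + 3 * M ^ 2) ^ ((2 - p) / 4) * ‖V p ξ - V p η‖ := by
  set C : ℝ := 2 + 3 * M ^ 2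
  have hC : 0 < C := by positivity
  have hweight : (C * (1 + ‖ξ - η‖ ^ 2)) ^ ((p - 2) / 4) ≤
      (1 + ‖ξ‖ ^ 2 + ‖η‖ ^ 2) ^ ((p - 2) / 4) :=
    Real.rpow_le_rpow_of_nonpos (by positivity) (one_add_sq_add_sq_le_of_norm_le hη)
      (by linarith)
  have hcancel : C ^ ((2 - p) / 4) * C ^ ((p - 2) / 4) = 1 := by
    rw [← Real.rpow_add hC]; ring_nf; exact Real.rpow_zero C
  rw [Real.mul_rpow hC.le (by positivity)] at hweight
  calc ‖V p (ξ - η)‖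
      = 2 / p * C ^ ((2 - p) / 4) *
          (p / 2 * (C ^ ((p - 2) / 4) * (1 + ‖ξ - η‖ ^ 2) ^ ((p - 2) / 4)) * ‖ξ - η‖) := by
        rw [norm_V]; field_simp; rw [mul_assoc, hcancel, mul_one]
    _ ≤ 2 / p * C ^ ((2 - p) / 4) *
          (p / 2 * (1 + ‖ξ‖ ^ 2 + ‖η‖ ^ 2) ^ ((p - 2) / 4) * ‖ξ - η‖) := by gcongr
    _ ≤ 2 / p * C ^ ((2 - p) / 4) * ‖V p ξ - V p η‖ := by
        gcongr; exact mul_norm_le_norm_V_sub_V hp0.le hp2 ξ η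

end InnerProductSpace

theorem stmt_5_general (p : ℝ) (hp1 : 1 < p) (hp2 : p < 2) (k : ℕ)
    (M : ℝ) :
    ∃ c : ℝ, 0 < c ∧ ∀ ξ η : EuclideanSpace ℝ (Fin k), ‖η‖ ≤ M →
      ‖V p (ξ - η)‖ ≤ c * ‖V p ξ - V p η‖ := by
  have hp0 : 0 < p := by linarith
  exact ⟨2 / p * (2 + 3 * M ^ 2) ^ ((2 - p) / 4), by positivity,
    fun _ _ hη => norm_V_sub_le_of_norm_le hp0 hp2.le hη⟩

theorem stmt_5 (p : ℝ) (hp1 : 1 < p) (hp2 : p < 2) (k : ℕ) (hk : 1 ≤ k)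
    (M : ℝ) (hM : 0 < M) :
    ∃ c : ℝ, 0 < c ∧ ∀ ξ η : EuclideanSpace ℝ (Fin k), ‖η‖ ≤ M →
      ‖V p (ξ - η)‖ ≤ c * ‖V p ξ - V p η‖ :=
  stmt_5_general p hp1 hp2 k M
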